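/- For λ ∈ C̄, λ ≠ 0, every solution u ∈ X of a⁻u = λu (where a⁻φ = (Δφ)^{1/q}) has the form u(t) = μ^{−1} Σ_{n=0}^∞ c^{q^n} f_n(t) for some c ∈ C̄ with |c| < 1, where μ = λ^{q/(q−1)} for some choice of (q−1)-th root; conversely every such series defines an element of X satisfying a⁻u = λu. -/

import Mathlib

noncomputable section

open Filter Topology

/-- The bracket `[i] = x^{q^i} - x` as a polynomial over `F_q`. -/
def carBrP (Fq : Type*) [CommRing Fq] (q i : ℕ) : Polynomial Fq :=
  Polynomial.X ^ q ^ i - Polynomial.X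

/-- `D_0 = 1`, `D_i = [i] D_{i-1}^q`, as polynomials over `F_q`. -/
def carDP (Fq : Type*) [CommRing Fq] (q : ℕ) : ℕ → Polynomial Fq
  | 0 => 1
  | i + 1 => carBrP Fq q (i + 1) * (carDP Fq q i) ^ q

/-- The Carlitz polynomial function `e_i(t) = ∏_{m ∈ F_q[x], deg m < i} (t - m)`,
for `t ∈ O`, with values in `C̄`; here `σ : F_q[x] → O` and `ι : O → C̄` are the
structural embeddings, and the product runs over all polynomials `m` of degree `< i`,
enumerated by coefficient tuples. -/
def carE {Fq O Cbar : Type*} [Field Fq] [Fintype Fq] [CommRing O] [Field Cbar]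
    (σ : Polynomial Fq →+* O) (ι : O →+* Cbar) (i : ℕ) (t : O) : Cbar :=
  ∏ c : Fin i → Fq,
    (ι t - ι (σ (∑ k : Fin i, Polynomial.C (c k) * Polynomial.X ^ (k : ℕ))))

/-- The normalized Carlitz function `f_i(t) = e_i(t)/D_i`. -/
def carF {Fq O Cbar : Type*} [Field Fq] [Fintype Fq] [CommRing O] [Field Cbar]
    (q : ℕ) (σ : Polynomial Fq →+* O) (ι : O →+* Cbar) (i : ℕ) (t : O) : Cbar :=
  carE σ ι i t / ι (σ (carDP Fq q i))

/-- Membership in the space `X` of continuous `F_q`-linear functions `O → C̄`. -/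
def IsCarFun {Fq O Cbar : Type*} [Field Fq] [Fintype Fq] [CommRing O]
    [TopologicalSpace O] [Field Cbar] [TopologicalSpace Cbar]
    (σ : Polynomial Fq →+* O) (ι : O →+* Cbar) (φ : O → Cbar) : Prop :=
  Continuous φ ∧ (∀ t s : O, φ (t + s) = φ t + φ s) ∧
    ∀ (β : Fq) (t : O),
      φ (σ (Polynomial.C β) * t) = ι (σ (Polynomial.C β)) * φ t

/-- `φ = Σ c_i f_i` as a uniformly convergent series with `c_i → 0`. -/
def HasCarExpansion {O Cbar : Type*} [NormedField Cbar]
    (f : ℕ → O → Cbar) (φ : O → Cbar) (c : ℕ → Cbar) : Prop :=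
  Tendsto c atTop (𝓝 (0 : Cbar)) ∧
    TendstoUniformly (fun N t => ∑ i ∈ Finset.range N, c i * f i t) φ atTop

/-- The difference operator `(Δφ)(t) = φ(xt) - xφ(t)` on functions `O → C̄`. -/
def carDeltaFun {Fq O Cbar : Type*} [Field Fq] [Fintype Fq] [CommRing O] [Field Cbar]
    (σ : Polynomial Fq →+* O) (ι : O →+* Cbar) (φ : O → Cbar) : O → Cbar :=
  fun t => φ (σ Polynomial.X * t) - ι (σ Polynomial.X) * φ t

/-!
For `e_i(z) = ∏_{deg m < i} (z - m)` the map `z ↦ e_i(z)` is `F_q`-linear, since `e_i` has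
degree `q^i` and is invariant under translation by its `q^i` roots. This gives
`e_{i+1} = e_i^q - e_i(x^i)^{q-1} e_i`, and then by induction
`e_{i+1}(xz) = x e_{i+1}(z) + [i+1] e_i(z)^q` and `e_i(x^i) = D_i`. For `f_i = e_i / D_i` this
reads `Δ f_{i+1} = f_i^q`, `Δ f_0 = 0`, so `Δ(Σ c_i f_i) = Σ c_{i+1} f_i^q`, while
`(λ Σ c_i f_i)^q = Σ λ^q c_i^q f_i^q` by Frobenius. As `f_i(x^j)` vanishes for `j < i` and is
`1` for `j = i`, evaluating at the points `x^j` shows that `Δu = (λu)^q` holds iff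
`c_{n+1} = λ^q c_n^q` for all `n`, i.e. `c_n = μ⁻¹ (μ c_0)^{q^n}`; then `c_n → 0` forces
`|μ c_0| < 1`.
-/

open Polynomial

section VanishingProd

variable {A K : Type*} [Fintype A] [Field K]

def vanishingProd (v : A → K) (z : K) : K := ∏ a, (z - v a)

theorem vanishingProd_apply_self (v : A → K) (a : A) : vanishingProd v (v a) = 0 :=
  Finset.prod_eq_zero (Finset.mem_univ a) (sub_self _)

variable [AddCommGroup A]

theorem vanishingProd_map_add (v : A →+ K) (a : A) (z : K) :
    vanishingProd v (v a + z) = vanishingProd v z := by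
  unfold vanishingProd
  rw [← Equiv.prod_comp (Equiv.addLeft a)]
  simp [add_sub_add_left_eq_sub]

/-- The polynomial `∏ (X - v a)` is additive: `Q(Y) = P(Y + y) - P(Y) - P(y)` has degree
`< #A` and vanishes on the `#A` points `v a`. -/
theorem vanishingProd_add (v : A →+ K) (hv : Function.Injective v) (y z : K) :
    vanishingProd v (y + z) = vanishingProd v y + vanishingProd v z := by
  set P : K[X] := ∏ a, (X - C (v a))
  have hP : ∀ w, P.eval w = vanishingProd v w := fun w => by simp [P, eval_prod, vanishingProd]
  have hdeg : P.IsMonicOfDegree (Fintype.card A) :=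
    ⟨by simp [P], monic_prod_of_monic _ _ fun a _ => monic_X_sub_C _⟩
  set Q : K[X] := P.comp (X + C y) - P - C (vanishingProd v y)
  have hQ : Q = 0 := by
    refine eq_zero_of_natDegree_lt_card_of_eval_eq_zero Q hv (fun a => ?_) ?_
    · simp [Q, hP, vanishingProd_map_add, vanishingProd_apply_self]
    · have hA : Fintype.card A ≠ 0 := Fintype.card_ne_zero
      have := (mul_one (Fintype.card A) ▸ hdeg.comp one_ne_zero
        (isMonicOfDegree_X_add_one y)).natDegree_sub_lt hA hdeg
      exact (natDegree_sub_le _ _).trans_lt (by simpa [Nat.pos_of_ne_zero hA] using this)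
  have := congrArg (eval z) hQ
  simp only [Q, eval_sub, eval_comp, eval_add, eval_X, eval_C, hP, eval_zero] at this
  rw [add_comm y z]
  linear_combination this

end VanishingProd

section FiniteField

variable {F K : Type*} [Field F] [Fintype F]

theorem vanishingProd_map_mul [Field K] {A : Type*} [AddCommGroup A] [Module F A] [Fintype A]
    (φ : F →+* K) (v : A →+ K) (hv : ∀ (β : F) (a : A), v (β • a) = φ β * v a)
    (β : F) (z : K) :
    vanishingProd v (φ β * z) = φ β * vanishingProd v z := by
  rcases eq_or_ne β 0 with rfl | hβ
  · simpa using vanishingProd_apply_self v 0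
  have hcard : φ β ^ Fintype.card A = φ β := by
    rw [Module.card_eq_pow_finrank (K := F), ← map_pow, FiniteField.pow_card_pow]
  unfold vanishingProd
  rw [← Equiv.prod_comp (MulAction.toPerm (Units.mk0 β hβ))]
  simp only [MulAction.toPerm_apply, Units.smul_mk0, hv, ← mul_sub, Finset.prod_mul_distrib,
    Finset.prod_const, Finset.card_univ, hcard]

theorem prod_X_sub_C_eq_X_pow_card_sub_X : ∏ β : F, (X - C β) = X ^ Fintype.card F - X := by
  have hmonic : (X ^ Fintype.card F - X : F[X]).Monic :=
    monic_X_pow_sub (by simpa using Fintype.one_lt_card (α := F))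
  have h := prod_multiset_X_sub_C_of_monic_of_roots_card_eq hmonic (by
    rw [FiniteField.roots_X_pow_card_sub_X, FiniteField.X_pow_card_sub_X_natDegree_eq F
      Fintype.one_lt_card]
    rfl)
  rwa [FiniteField.roots_X_pow_card_sub_X] at h

theorem prod_sub_map_mul [Field K] (φ : F →+* K) (Z a : K) :
    ∏ β : F, (Z - φ β * a) = Z ^ Fintype.card F - a ^ (Fintype.card F - 1) * Z := by
  have hq : 1 < Fintype.card F := Fintype.one_lt_card
  rcases eq_or_ne a 0 with rfl | ha
  · simp [zero_pow (Nat.sub_ne_zero_of_lt hq)]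
  have := congrArg (fun P => (P.map φ).eval (Z / a)) (prod_X_sub_C_eq_X_pow_card_sub_X (F := F))
  simp only [Polynomial.map_prod, Polynomial.map_sub, map_X, map_C, eval_prod, eval_sub, eval_X,
    eval_C, Polynomial.map_pow, eval_pow] at this
  obtain ⟨n, hn⟩ := Nat.exists_eq_add_one_of_ne_zero (Fintype.card_ne_zero (α := F))
  calc ∏ β : F, (Z - φ β * a) = ∏ β : F, (a * (Z / a - φ β)) :=
        Finset.prod_congr rfl fun β _ => by field_simp
    _ = a ^ Fintype.card F * ((Z / a) ^ Fintype.card F - Z / a) := by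
        rw [Finset.prod_mul_distrib, Finset.prod_const, Finset.card_univ, this]
    _ = _ := by
        rw [hn, Nat.add_sub_cancel, mul_sub, ← mul_pow, mul_div_cancel₀ _ ha, pow_succ a,
          mul_assoc, mul_div_cancel₀ _ ha]

def powCardHom {R : Type*} [CommRing R] (φ : F →+* R) : R →+* R :=
  letI := φ.toAlgebra
  (FiniteField.frobeniusAlgHom F R).toRingHom

@[simp]
theorem powCardHom_apply {R : Type*} [CommRing R] (φ : F →+* R) (x : R) :
    powCardHom φ x = x ^ Fintype.card F := rfl

end FiniteField

section Carlitz

variable {Fq K : Type*} [Field Fq] [Field K]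

def coeffsToPoly (i : ℕ) : (Fin i → Fq) →ₗ[Fq] Fq[X] :=
  (degreeLT Fq i).subtype ∘ₗ (degreeLTEquiv Fq i).symm.toLinearMap

theorem coeffsToPoly_apply {i : ℕ} (c : Fin i → Fq) :
    coeffsToPoly i c = ∑ k, C (c k) * X ^ (k : ℕ) := by
  simp [coeffsToPoly, degreeLTEquiv, C_mul_X_pow_eq_monomial]

theorem coeffsToPoly_injective (i : ℕ) : Function.Injective (coeffsToPoly (Fq := Fq) i) :=
  Subtype.val_injective.comp (degreeLTEquiv Fq i).symm.injective

theorem exists_coeffsToPoly_eq {i : ℕ} {m : Fq[X]} (hm : m.degree < i) :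
    ∃ c, coeffsToPoly i c = m :=
  ⟨degreeLTEquiv Fq i ⟨m, mem_degreeLT.2 hm⟩, by simp [coeffsToPoly]⟩

theorem coeffsToPoly_snoc {i : ℕ} (c : Fin i → Fq) (β : Fq) :
    coeffsToPoly (i + 1) (Fin.snoc c β) = coeffsToPoly i c + C β * X ^ i := by
  simp [coeffsToPoly_apply, Fin.sum_univ_castSucc]

variable [Fintype Fq] (τ : Fq[X] →+* K)

local notation "q" => Fintype.card Fq

def carlitzLattice (i : ℕ) : (Fin i → Fq) →+ K :=
  τ.toAddMonoidHom.comp (coeffsToPoly i).toAddMonoidHom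

/-- The Carlitz polynomial `e_i(z) = ∏_{deg m < i} (z - τ m)`. -/
def carlitzProd (i : ℕ) : K → K :=
  vanishingProd (carlitzLattice τ i)

theorem carlitzProd_apply (i : ℕ) (z : K) :
    carlitzProd τ i z = ∏ c : Fin i → Fq, (z - τ (∑ k, C (c k) * X ^ (k : ℕ))) := by
  simp [carlitzProd, vanishingProd, carlitzLattice, coeffsToPoly_apply]

@[simp]
theorem carlitzProd_zero (z : K) : carlitzProd τ 0 z = z := by
  simp [carlitzProd_apply]

theorem carlitzProd_eq_zero_of_degree_lt {i : ℕ} {m : Fq[X]} (hm : m.degree < i) :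
    carlitzProd τ i (τ m) = 0 := by
  obtain ⟨c, rfl⟩ := exists_coeffsToPoly_eq hm
  exact vanishingProd_apply_self (carlitzLattice τ i) c

theorem carlitzProd_C_mul (i : ℕ) (β : Fq) (z : K) :
    carlitzProd τ i (τ (C β) * z) = τ (C β) * carlitzProd τ i z :=
  vanishingProd_map_mul (τ.comp C) (carlitzLattice τ i)
    (fun β c => by simp [carlitzLattice, smul_eq_C_mul]) β z

variable {τ}

theorem carlitzProd_add (hτ : Function.Injective τ) (i : ℕ) (y z : K) :
    carlitzProd τ i (y + z) = carlitzProd τ i y + carlitzProd τ i z :=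
  vanishingProd_add _ (hτ.comp (coeffsToPoly_injective i)) y z

theorem carlitzProd_sub (hτ : Function.Injective τ) (i : ℕ) (y z : K) :
    carlitzProd τ i (y - z) = carlitzProd τ i y - carlitzProd τ i z :=
  (AddMonoidHom.mk' (carlitzProd τ i) (carlitzProd_add hτ i)).map_sub y z

theorem carlitzProd_succ (hτ : Function.Injective τ) (i : ℕ) (z : K) :
    carlitzProd τ (i + 1) z =
      carlitzProd τ i z ^ q - carlitzProd τ i (τ (X ^ i)) ^ (q - 1) * carlitzProd τ i z := by
  have hsplit :
      carlitzProd τ (i + 1) z = ∏ β : Fq, carlitzProd τ i (z - τ (C β) * τ (X ^ i)) := by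
    rw [carlitzProd, vanishingProd, ← (Fin.snocEquiv fun _ => Fq).prod_comp,
      Fintype.prod_prod_type]
    refine Finset.prod_congr rfl fun β _ => Finset.prod_congr rfl fun c _ => ?_
    simp [Fin.snocEquiv, carlitzLattice, coeffsToPoly_snoc]
    ring
  simp_rw [hsplit, carlitzProd_sub hτ, carlitzProd_C_mul]
  exact prod_sub_map_mul (τ.comp C) _ _

theorem carlitzProd_X_pow_succ_of {i : ℕ}
    (hmul : ∀ z, carlitzProd τ (i + 1) (τ X * z) =
      τ X * carlitzProd τ (i + 1) z + τ (carBrP Fq q (i + 1)) * carlitzProd τ i z ^ q) :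
    carlitzProd τ (i + 1) (τ (X ^ (i + 1))) =
      τ (carBrP Fq q (i + 1)) * carlitzProd τ i (τ (X ^ i)) ^ q := by
  have hvanish : carlitzProd τ (i + 1) (τ (X ^ i)) = 0 :=
    carlitzProd_eq_zero_of_degree_lt τ (by rw [degree_X_pow]; exact_mod_cast i.lt_succ_self)
  rw [pow_succ', map_mul, hmul, hvanish, mul_zero, zero_add]

theorem carlitzProd_X_mul_succ (hτ : Function.Injective τ) (i : ℕ) (z : K) :
    carlitzProd τ (i + 1) (τ X * z) =
      τ X * carlitzProd τ (i + 1) z + τ (carBrP Fq q (i + 1)) * carlitzProd τ i z ^ q := by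
  have frob_add : ∀ a b : K, (a + b) ^ q = a ^ q + b ^ q := map_add (powCardHom (τ.comp C))
  have frob_sub : ∀ a b : K, (a - b) ^ q = a ^ q - b ^ q := map_sub (powCardHom (τ.comp C))
  have hq : 1 ≤ q := Fintype.card_pos
  have hbr : ∀ j, τ (carBrP Fq q j) = τ X ^ q ^ j - τ X := by simp [carBrP]
  induction i generalizing z with
  | zero =>
    simp only [carlitzProd_succ hτ, carlitzProd_zero, pow_zero, map_one, one_pow, one_mul, hbr,
      mul_pow]
    ring
  | succ i ih =>
    set x := τ X
    set u := carlitzProd τ (i + 1) z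
    set v := carlitzProd τ i z
    set a := carlitzProd τ i (τ (X ^ i))
    set B := τ (carBrP Fq q (i + 1))
    have hA := carlitzProd_X_pow_succ_of ih
    have hu : u ^ q = (v ^ q) ^ q - (a ^ (q - 1)) ^ q * v ^ q := by
      rw [show u = v ^ q - a ^ (q - 1) * v from carlitzProd_succ hτ i z, frob_sub, mul_pow]
    have hB : τ (carBrP Fq q (i + 2)) = B ^ q + x ^ q - x := by
      rw [hbr, show B = x ^ q ^ (i + 1) - x from hbr _, frob_sub, ← pow_mul, ← pow_succ]
      ring
    have hBq : B ^ (q - 1) * B = B ^ q := by rw [← pow_succ, Nat.sub_add_cancel hq]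
    -- the two sides differ by `B^q (v^{q²} - u^q) - A^{q-1} B v^q`, zero since `A = B a^q`
    rw [carlitzProd_succ hτ (i + 1), carlitzProd_succ hτ (i + 1) z, ih, hA, hB, frob_add,
      mul_pow, mul_pow, mul_pow]
    linear_combination (-(B ^ q)) * hu + (B ^ q * v ^ q) * pow_right_comm a (q - 1) q
      - ((a ^ q) ^ (q - 1) * v ^ q) * hBq

theorem carlitzProd_X_pow_self (hτ : Function.Injective τ) (i : ℕ) :
    carlitzProd τ i (τ (X ^ i)) = τ (carDP Fq q i) := by
  induction i with
  | zero => simp [carDP]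
  | succ i ih =>
    rw [carlitzProd_X_pow_succ_of (carlitzProd_X_mul_succ hτ i), ih, carDP, map_mul, map_pow]

end Carlitz

theorem carDP_ne_zero {Fq : Type*} [Field Fq] {q : ℕ} (hq : 1 < q) (i : ℕ) :
    carDP Fq q i ≠ 0 := by
  induction i with
  | zero => exact one_ne_zero
  | succ i ih =>
    exact mul_ne_zero (FiniteField.X_pow_card_pow_sub_X_ne_zero Fq i.succ_ne_zero hq)
      (pow_ne_zero q ih)

section CarlitzFunctions

variable {Fq O K : Type*} [Field Fq] [Fintype Fq] [CommRing O] [Field K]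
  {σ : Fq[X] →+* O} {ι : O →+* K}

local notation "q" => Fintype.card Fq

theorem carE_eq_carlitzProd (i : ℕ) (t : O) :
    carE σ ι i t = carlitzProd (ι.comp σ) i (ι t) := by
  rw [carlitzProd_apply]
  rfl

theorem carF_add (hτ : Function.Injective (ι.comp σ)) (i : ℕ) (t s : O) :
    carF q σ ι i (t + s) = carF q σ ι i t + carF q σ ι i s := by
  simp only [carF, carE_eq_carlitzProd, map_add, carlitzProd_add hτ, add_div]

theorem carF_C_mul (i : ℕ) (β : Fq) (t : O) :
    carF q σ ι i (σ (C β) * t) = ι (σ (C β)) * carF q σ ι i t := by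
  simpa [carF, carE_eq_carlitzProd, mul_div_assoc] using
    congrArg (· / ι (σ (carDP Fq q i))) (carlitzProd_C_mul (ι.comp σ) i β (ι t))

theorem carF_zero_X_mul (t : O) : carF q σ ι 0 (σ X * t) = ι (σ X) * carF q σ ι 0 t := by
  simp [carF, carE_eq_carlitzProd, carDP]

theorem carF_X_mul_succ (hτ : Function.Injective (ι.comp σ)) (i : ℕ) (t : O) :
    carF q σ ι (i + 1) (σ X * t) =
      ι (σ X) * carF q σ ι (i + 1) t + carF q σ ι i t ^ q := by
  have hB : ι (σ (carBrP Fq q (i + 1))) ≠ 0 := (map_ne_zero_iff _ hτ).mpr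
    (FiniteField.X_pow_card_pow_sub_X_ne_zero Fq i.succ_ne_zero Fintype.one_lt_card)
  have hmul := carlitzProd_X_mul_succ hτ i (ι t)
  simp only [RingHom.comp_apply] at hmul
  simp only [carF, carE_eq_carlitzProd, map_mul, hmul, carDP, map_pow, div_pow]
  field_simp

theorem carF_X_pow_of_lt {i j : ℕ} (hji : j < i) : carF q σ ι i (σ (X ^ j)) = 0 := by
  have h : carlitzProd (ι.comp σ) i ((ι.comp σ) (X ^ j)) = 0 :=
    carlitzProd_eq_zero_of_degree_lt _ (by rw [degree_X_pow]; exact_mod_cast hji)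
  rw [carF, carE_eq_carlitzProd, ← RingHom.comp_apply, h, zero_div]

theorem carF_X_pow_self (hτ : Function.Injective (ι.comp σ)) (i : ℕ) :
    carF q σ ι i (σ (X ^ i)) = 1 := by
  rw [carF, carE_eq_carlitzProd, ← RingHom.comp_apply, carlitzProd_X_pow_self hτ]
  exact div_self ((map_ne_zero_iff _ hτ).mpr (carDP_ne_zero Fintype.one_lt_card i))

theorem continuous_carF [TopologicalSpace O] [TopologicalSpace K] [IsTopologicalRing K]
    (hι : Continuous ι) (i : ℕ) : Continuous (carF q σ ι i) := by
  unfold carF carE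
  fun_prop

end CarlitzFunctions

section Sequences

open Finset

theorem eq_zero_of_tendsto_sum_mul_triangular {R : Type*} [Semiring R] [TopologicalSpace R]
    [T2Space R] {g : ℕ → ℕ → R} (hg : ∀ i j, j < i → g i j = 0)
    (hgdiag : ∀ j, g j j = 1)
    {d : ℕ → R} (hd : ∀ j, Tendsto (fun N => ∑ i ∈ range N, d i * g i j) atTop (𝓝 0))
    (n : ℕ) : d n = 0 := by
  have hsum : ∀ j, ∑ i ∈ range (j + 1), d i * g i j = 0 := fun j =>
    tendsto_nhds_unique (tendsto_atTop_of_eventually_const fun N hN =>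
      (sum_subset (range_subset_range.mpr hN) fun i hi hij => by
        rw [hg i j (by simp_all), mul_zero]).symm) (hd j)
  induction n using Nat.strong_induction_on with
  | _ n ih =>
    have := hsum n
    rwa [sum_range_succ, sum_eq_zero fun i hi => by rw [ih i (mem_range.mp hi), zero_mul],
      zero_add, hgdiag, mul_one] at this

theorem norm_lt_one_of_tendsto_mul_pow {K : Type*} [NormedField K] {a b : K} (ha : a ≠ 0)
    {k : ℕ → ℕ} (h : Tendsto (fun n => a * b ^ k n) atTop (𝓝 0)) : ‖b‖ < 1 := by
  by_contra! hb
  obtain ⟨n, hn⟩ := (NormedAddGroup.tendsto_nhds_zero.mp h ‖a‖ (norm_pos_iff.mpr ha)).exists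
  rw [norm_mul, norm_pow] at hn
  nlinarith [one_le_pow₀ hb (n := k n), norm_nonneg a]

variable {K : Type*} [Field K] {q : ℕ} {lam μ : K}

theorem inv_mul_pow_pow_succ (hq : q ≠ 0) (hμ : μ ^ (q - 1) = lam ^ q) (hμ0 : μ ≠ 0)
    (b : K) (n : ℕ) : μ⁻¹ * b ^ q ^ (n + 1) = lam ^ q * (μ⁻¹ * b ^ q ^ n) ^ q := by
  have hμq : μ ^ q = μ ^ (q - 1) * μ := by rw [← pow_succ, Nat.sub_add_cancel (by omega)]
  rw [mul_pow, ← pow_mul, ← pow_succ, ← hμ, ← mul_assoc, inv_pow, hμq]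
  field_simp

theorem eq_inv_mul_pow_pow_of_succ (hq : q ≠ 0) (hμ : μ ^ (q - 1) = lam ^ q) (hμ0 : μ ≠ 0)
    {c : ℕ → K} (hc : ∀ n, c (n + 1) = lam ^ q * c n ^ q) (n : ℕ) :
    c n = μ⁻¹ * (μ * c 0) ^ q ^ n := by
  induction n with
  | zero => rw [pow_zero, pow_one, inv_mul_cancel_left₀ hμ0]
  | succ n ih => rw [hc, ih, inv_mul_pow_pow_succ hq hμ hμ0]

end Sequences

section CarlitzSeries

open Finset

variable {Fq O K : Type*} [Field Fq] [Fintype Fq] [CommRing O] [Field K]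
  {σ : Fq[X] →+* O} {ι : O →+* K}

local notation "q" => Fintype.card Fq

theorem sum_carF_X_mul (hτ : Function.Injective (ι.comp σ)) (c : ℕ → K) (t : O) (N : ℕ) :
    ∑ i ∈ range (N + 1), c i * carF q σ ι i (σ X * t) =
      ι (σ X) * ∑ i ∈ range (N + 1), c i * carF q σ ι i t +
        ∑ i ∈ range N, c (i + 1) * carF q σ ι i t ^ q := by
  induction N with
  | zero => simp [carF_zero_X_mul, mul_left_comm]
  | succ N ih =>
    rw [sum_range_succ (fun i => c i * carF q σ ι i (σ X * t)), ih, carF_X_mul_succ hτ,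
      sum_range_succ (fun i => c i * carF q σ ι i t) (N + 1),
      sum_range_succ (fun i => c (i + 1) * carF q σ ι i t ^ q)]
    ring

variable [TopologicalSpace K] [IsTopologicalRing K] {u : O → K} {c : ℕ → K}

theorem tendsto_carDeltaFun (hτ : Function.Injective (ι.comp σ))
    (hu : ∀ t, Tendsto (fun N => ∑ i ∈ range N, c i * carF q σ ι i t) atTop (𝓝 (u t)))
    (t : O) :
    Tendsto (fun N => ∑ i ∈ range N, c (i + 1) * carF q σ ι i t ^ q) atTop
      (𝓝 (carDeltaFun σ ι u t)) := by
  refine (((hu _).comp (tendsto_add_atTop_nat 1)).sub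
    (((hu t).comp (tendsto_add_atTop_nat 1)).const_mul (ι (σ X)))).congr fun N => ?_
  simp [sum_carF_X_mul hτ]

theorem tendsto_sum_carF_pow_card
    (hu : ∀ t, Tendsto (fun N => ∑ i ∈ range N, c i * carF q σ ι i t) atTop (𝓝 (u t)))
    (lam : K) (t : O) :
    Tendsto (fun N => ∑ i ∈ range N, lam ^ q * c i ^ q * carF q σ ι i t ^ q) atTop
      (𝓝 ((lam * u t) ^ q)) := by
  refine (((hu t).const_mul lam).pow q).congr fun N => ?_
  have := map_sum (powCardHom ((ι.comp σ).comp C)) (fun i => lam * (c i * carF q σ ι i t))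
    (range N)
  simp only [powCardHom_apply, mul_pow] at this
  rw [mul_sum, this]
  simp only [mul_assoc]

theorem carDeltaFun_eq_pow_iff [T2Space K] (hτ : Function.Injective (ι.comp σ))
    (hu : ∀ t, Tendsto (fun N => ∑ i ∈ range N, c i * carF q σ ι i t) atTop (𝓝 (u t)))
    (lam : K) :
    (∀ t, carDeltaFun σ ι u t = (lam * u t) ^ q) ↔ ∀ n, c (n + 1) = lam ^ q * c n ^ q := by
  constructor
  · intro h n
    refine sub_eq_zero.mp (eq_zero_of_tendsto_sum_mul_triangular
      (d := fun i => c (i + 1) - lam ^ q * c i ^ q)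
      (g := fun i j => carF q σ ι i (σ (X ^ j)) ^ q)
      (fun i j hji => by simp only [carF_X_pow_of_lt hji, zero_pow Fintype.card_ne_zero])
      (fun j => by simp only [carF_X_pow_self hτ, one_pow])
      (fun j => ?_) n)
    have := (tendsto_carDeltaFun hτ hu (σ (X ^ j))).sub
      (tendsto_sum_carF_pow_card hu lam (σ (X ^ j)))
    rw [h, sub_self] at this
    simpa [← sum_sub_distrib, sub_mul] using this
  · intro h t
    refine tendsto_nhds_unique (tendsto_carDeltaFun hτ hu t) ?_
    simpa only [h] using tendsto_sum_carF_pow_card hu lam t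

end CarlitzSeries

theorem HasCarExpansion.isCarFun {Fq O K : Type*} [Field Fq] [Fintype Fq] [CommRing O]
    [TopologicalSpace O] [NormedField K] {σ : Fq[X] →+* O} {ι : O →+* K} {u : O → K}
    {c : ℕ → K} (hι : Continuous ι) (hτ : Function.Injective (ι.comp σ))
    (h : HasCarExpansion (carF (Fintype.card Fq) σ ι) u c) : IsCarFun σ ι u := by
  have hu := h.2.tendsto_at
  refine ⟨h.2.continuous (Frequently.of_forall fun N => by
    exact continuous_finsetSum _ fun i _ => continuous_const.mul (continuous_carF hι i)),
    fun t s => tendsto_nhds_unique (hu (t + s)) ?_,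
    fun β t => tendsto_nhds_unique (hu _) ?_⟩
  · simpa [carF_add hτ, mul_add, Finset.sum_add_distrib] using (hu t).add (hu s)
  · simpa [carF_C_mul, mul_left_comm, Finset.mul_sum] using (hu t).const_mul (ι (σ (C β)))

theorem carlitz_coherent_states_general
    (q : ℕ)
    (Fq : Type*) [Field Fq] [Fintype Fq] (hcard : Fintype.card Fq = q)
    (O : Type*) [CommRing O] [TopologicalSpace O]
    [T2Space O]
    (Cbar : Type*) [NormedField Cbar] [IsAlgClosed Cbar]
    (σ : Polynomial Fq →+* O) (hσinj : Function.Injective σ)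
    (ι : O →+* Cbar) (hι : IsInducing ι)
    (lam : Cbar) (hlam : lam ≠ 0) :
    (∀ (u : O → Cbar) (c : ℕ → Cbar), IsCarFun σ ι u →
        HasCarExpansion (carF q σ ι) u c →
        (∀ t : O, carDeltaFun σ ι u t = (lam * u t) ^ q) →
        ∃ μ c₀ : Cbar, μ ^ (q - 1) = lam ^ q ∧ ‖c₀‖ < 1 ∧
          ∀ n : ℕ, c n = μ⁻¹ * c₀ ^ q ^ n) ∧
      ∀ (μ c₀ : Cbar), μ ^ (q - 1) = lam ^ q → ‖c₀‖ < 1 →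
        ∀ u : O → Cbar,
          HasCarExpansion (carF q σ ι) u (fun n => μ⁻¹ * c₀ ^ q ^ n) →
          IsCarFun σ ι u ∧ ∀ t : O, carDeltaFun σ ι u t = (lam * u t) ^ q := by
  subst hcard
  have hτ : Function.Injective (ι.comp σ) := hι.injective.comp hσinj
  have hq : 1 < Fintype.card Fq := Fintype.one_lt_card
  have hμ0 : ∀ μ : Cbar, μ ^ (Fintype.card Fq - 1) = lam ^ Fintype.card Fq → μ ≠ 0 := by
    rintro μ hμ rfl
    exact pow_ne_zero _ hlam (hμ.symm.trans (zero_pow (Nat.sub_ne_zero_of_lt hq)))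
  refine ⟨fun u c _ hexp hΔ => ?_, fun μ c₀ hμ _ u hexp => ?_⟩
  · obtain ⟨μ, hμ⟩ :=
      IsAlgClosed.exists_pow_nat_eq (lam ^ Fintype.card Fq) (Nat.sub_pos_of_lt hq)
    have hc := eq_inv_mul_pow_pow_of_succ (by omega) hμ (hμ0 μ hμ)
      ((carDeltaFun_eq_pow_iff hτ hexp.2.tendsto_at lam).mp hΔ)
    refine ⟨μ, μ * c 0, hμ, norm_lt_one_of_tendsto_mul_pow (inv_ne_zero (hμ0 μ hμ))
      (k := (Fintype.card Fq ^ ·)) ?_, hc⟩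
    exact funext hc ▸ hexp.1
  · exact ⟨hexp.isCarFun hι.continuous hτ,
      (carDeltaFun_eq_pow_iff hτ hexp.2.tendsto_at lam).mpr
        (inv_mul_pow_pow_succ (by omega) hμ (hμ0 μ hμ) c₀)⟩

theorem carlitz_coherent_states
    (p γ : ℕ) (hp : p.Prime) (hγ : 0 < γ) (q : ℕ) (hq : q = p ^ γ)
    (Fq : Type*) [Field Fq] [Fintype Fq] (hcard : Fintype.card Fq = q)
    (O : Type*) [CommRing O] [TopologicalSpace O] [IsTopologicalRing O]
    [CompactSpace O] [T2Space O]
    (Cbar : Type*) [NormedField Cbar] [CompleteSpace Cbar] [IsAlgClosed Cbar]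
    [CharP Cbar p]
    (hna : ∀ a b : Cbar, ‖a + b‖ ≤ max ‖a‖ ‖b‖)
    (σ : Polynomial Fq →+* O) (hσdense : DenseRange σ) (hσinj : Function.Injective σ)
    (ι : O →+* Cbar) (hι : IsInducing ι)
    (hnorm : ∀ P : Polynomial Fq, P ≠ 0 →
      ‖ι (σ P)‖ = (q : ℝ) ^ (-(P.rootMultiplicity 0) : ℤ))
    (lam : Cbar) (hlam : lam ≠ 0) :
    (∀ (u : O → Cbar) (c : ℕ → Cbar), IsCarFun σ ι u →
        HasCarExpansion (carF q σ ι) u c →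
        (∀ t : O, carDeltaFun σ ι u t = (lam * u t) ^ q) →
        ∃ μ c₀ : Cbar, μ ^ (q - 1) = lam ^ q ∧ ‖c₀‖ < 1 ∧
          ∀ n : ℕ, c n = μ⁻¹ * c₀ ^ q ^ n) ∧
      ∀ (μ c₀ : Cbar), μ ^ (q - 1) = lam ^ q → ‖c₀‖ < 1 →
        ∀ u : O → Cbar,
          HasCarExpansion (carF q σ ι) u (fun n => μ⁻¹ * c₀ ^ q ^ n) →
          IsCarFun σ ι u ∧ ∀ t : O, carDeltaFun σ ι u t = (lam * u t) ^ q :=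
  carlitz_coherent_states_general q Fq hcard O Cbar σ hσinj ι hι lam hlam
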